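/- Let κ be a regular cardinal, δ a limit ordinal, and (B_α)_{α≤δ} a continuously increasing chain of partial orders (i.e., B_γ = ∪_{α<γ} B_α for limit γ ≤ δ) with B_α ≤_κ B_{α+1} for all α < δ. Then B_α ≤_κ B_β for all α ≤ β ≤ δ. -/

import Mathlib

universe u v

open Cardinal

/-- `f` is a κ-Freese-Nation mapping on the partial order `P`. -/
def IsFNMap (κ : Cardinal.{u}) {P : Type u} [PartialOrder P] (f : P → Set P) : Prop :=
  (∀ a, #(f a) < κ) ∧
    ∀ a b : P, a ≤ b → ∃ c, c ∈ f a ∧ c ∈ f b ∧ a ≤ c ∧ c ≤ b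

/-- The partial order `P` has the κ-Freese-Nation property. -/
def HasFN (κ : Cardinal.{u}) (P : Type u) [PartialOrder P] : Prop :=
  ∃ f : P → Set P, IsFNMap κ f

/-- `A` is a κ-substructure of the ambient partial order `P`: for every `b : P`,
`{a ∈ A | a ≤ b}` has a cofinal subset of size `< κ` and `{a ∈ A | b ≤ a}` has a
coinitial subset of size `< κ`. -/
def SubKappa (κ : Cardinal.{u}) {P : Type u} [PartialOrder P] (A : Set P) : Prop :=
  ∀ b : P,
    (∃ U : Set P, U ⊆ A ∧ #U < κ ∧ (∀ u ∈ U, u ≤ b) ∧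
      (∀ a ∈ A, a ≤ b → ∃ u ∈ U, a ≤ u)) ∧
    (∃ V : Set P, V ⊆ A ∧ #V < κ ∧ (∀ v ∈ V, b ≤ v) ∧
      (∀ a ∈ A, b ≤ a → ∃ v ∈ V, v ≤ a))

/-- `A ≤_κ B` for two subsets of an ambient partial order:
`A ⊆ B` and `A` is a κ-substructure of the suborder `B`. -/
def RelSubKappa (κ : Cardinal.{u}) {P : Type u} [PartialOrder P] (A B : Set P) : Prop :=
  A ⊆ B ∧ SubKappa κ {x : B | (x : P) ∈ A}


/-- Reformulation of `RelSubKappa` entirely inside the ambient order. -/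
def RelSubKappa' (κ : Cardinal.{u}) {P : Type u} [PartialOrder P] (A B : Set P) : Prop :=
  A ⊆ B ∧ ∀ b ∈ B,
    (∃ U : Set P, U ⊆ A ∧ #U < κ ∧ (∀ u ∈ U, u ≤ b) ∧
      (∀ a ∈ A, a ≤ b → ∃ u ∈ U, a ≤ u)) ∧
    (∃ V : Set P, V ⊆ A ∧ #V < κ ∧ (∀ v ∈ V, b ≤ v) ∧
      (∀ a ∈ A, b ≤ a → ∃ v ∈ V, v ≤ a))

theorem relSubKappa_iff (κ : Cardinal.{u}) {P : Type u} [PartialOrder P] (A B : Set P) :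
    RelSubKappa κ A B ↔ RelSubKappa' κ A B := by
  constructor
  · rintro ⟨hAB, h⟩
    refine ⟨hAB, fun b hb => ?_⟩
    obtain ⟨⟨U, hUA, hUκ, hUle, hUcof⟩, ⟨V, hVA, hVκ, hVle, hVcof⟩⟩ := h ⟨b, hb⟩
    constructor
    · refine ⟨Subtype.val '' U, ?_, ?_, ?_, ?_⟩
      · rintro _ ⟨u, hu, rfl⟩; exact hUA hu
      · rwa [Cardinal.mk_image_eq Subtype.val_injective]
      · rintro _ ⟨u, hu, rfl⟩; exact hUle u hu
      · intro a ha hab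
        obtain ⟨u, hu, hau⟩ := hUcof ⟨a, hAB ha⟩ ha hab
        exact ⟨u, ⟨u, hu, rfl⟩, hau⟩
    · refine ⟨Subtype.val '' V, ?_, ?_, ?_, ?_⟩
      · rintro _ ⟨v, hv, rfl⟩; exact hVA hv
      · rwa [Cardinal.mk_image_eq Subtype.val_injective]
      · rintro _ ⟨v, hv, rfl⟩; exact hVle v hv
      · intro a ha hba
        obtain ⟨v, hv, hva⟩ := hVcof ⟨a, hAB ha⟩ ha hba
        exact ⟨v, ⟨v, hv, rfl⟩, hva⟩
  · rintro ⟨hAB, h⟩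
    refine ⟨hAB, fun b => ?_⟩
    obtain ⟨⟨U, hUA, hUκ, hUle, hUcof⟩, ⟨V, hVA, hVκ, hVle, hVcof⟩⟩ := h b.1 b.2
    constructor
    · refine ⟨Subtype.val ⁻¹' U, fun u hu => hUA hu, ?_, fun u hu => hUle _ hu, ?_⟩
      · exact (Cardinal.mk_preimage_of_injective _ _ Subtype.val_injective).trans_lt hUκ
      · intro a ha hab
        obtain ⟨u, hu, hau⟩ := hUcof a.1 ha hab
        exact ⟨⟨u, hAB (hUA hu)⟩, hu, hau⟩
    · refine ⟨Subtype.val ⁻¹' V, fun v hv => hVA hv, ?_, fun v hv => hVle _ hv, ?_⟩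
      · exact (Cardinal.mk_preimage_of_injective _ _ Subtype.val_injective).trans_lt hVκ
      · intro a ha hba
        obtain ⟨v, hv, hva⟩ := hVcof a.1 ha hba
        exact ⟨⟨v, hAB (hVA hv)⟩, hv, hva⟩

theorem relSubKappa'_refl (κ : Cardinal.{u}) (hκ : κ.IsRegular) {P : Type u} [PartialOrder P]
    (A : Set P) : RelSubKappa' κ A A := by
  refine ⟨subset_rfl, fun b hb => ?_⟩
  have h1 : #({b} : Set P) < κ := by
    rw [Cardinal.mk_singleton]
    exact one_lt_aleph0.trans_le hκ.aleph0_le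
  exact ⟨⟨{b}, by simpa using hb, h1, by simp, fun a _ hab => ⟨b, rfl, hab⟩⟩,
    ⟨{b}, by simpa using hb, h1, by simp, fun a _ hba => ⟨b, rfl, hba⟩⟩⟩

theorem relSubKappa'_trans (κ : Cardinal.{u}) (hκ : κ.IsRegular) {P : Type u} [PartialOrder P]
    {A C D : Set P} (h1 : RelSubKappa' κ A C) (h2 : RelSubKappa' κ C D) :
    RelSubKappa' κ A D := by
  obtain ⟨hAC, hac⟩ := h1
  obtain ⟨hCD, hcd⟩ := h2
  refine ⟨hAC.trans hCD, fun b hb => ?_⟩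
  obtain ⟨⟨V, hVC, hVκ, hVle, hVcof⟩, ⟨W, hWC, hWκ, hWle, hWcof⟩⟩ := hcd b hb
  constructor
  · choose U hUA hUκ hUle hUcof using fun (v : P) (hv : v ∈ V) => (hac v (hVC hv)).1
    refine ⟨⋃ (v : P) (hv : v ∈ V), U v hv, ?_, ?_, ?_, ?_⟩
    · exact Set.iUnion₂_subset fun v hv => hUA v hv
    · exact (Cardinal.card_biUnion_lt_iff_forall_of_isRegular hκ hVκ).2 hUκ
    · intro u hu
      obtain ⟨v, hv, hu'⟩ := Set.mem_iUnion₂.1 hu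
      exact (hUle v hv u hu').trans (hVle v hv)
    · intro a ha hab
      obtain ⟨v, hv, hav⟩ := hVcof a (hAC ha) hab
      obtain ⟨u, hu, hau⟩ := hUcof v hv a ha hav
      exact ⟨u, Set.mem_iUnion₂.2 ⟨v, hv, hu⟩, hau⟩
  · choose U hUA hUκ hUle hUcof using fun (v : P) (hv : v ∈ W) => (hac v (hWC hv)).2
    refine ⟨⋃ (v : P) (hv : v ∈ W), U v hv, ?_, ?_, ?_, ?_⟩
    · exact Set.iUnion₂_subset fun v hv => hUA v hv
    · exact (Cardinal.card_biUnion_lt_iff_forall_of_isRegular hκ hWκ).2 hUκ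
    · intro u hu
      obtain ⟨v, hv, hu'⟩ := Set.mem_iUnion₂.1 hu
      exact (hWle v hv).trans (hUle v hv u hu')
    · intro a ha hba
      obtain ⟨v, hv, hva⟩ := hWcof a (hAC ha) hba
      obtain ⟨u, hu, hua⟩ := hUcof v hv a ha hva
      exact ⟨u, Set.mem_iUnion₂.2 ⟨v, hv, hu⟩, hua⟩

/-- For regular κ and a continuously increasing chain (B_α)_{α ≤ δ} with
B_α ≤_κ B_{α+1} for all α < δ, we have B_α ≤_κ B_β for all α ≤ β ≤ δ. -/
theorem statement7 (κ : Cardinal.{u}) (hκ : κ.IsRegular) {P : Type u} [PartialOrder P]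
    (δ : Ordinal.{u}) (hδ : Order.IsSuccLimit δ) (B : Ordinal.{u} → Set P)
    (hmono : ∀ α β : Ordinal.{u}, α ≤ β → β ≤ δ → B α ⊆ B β)
    (hcont : ∀ γ ≤ δ, Order.IsSuccLimit γ → B γ = ⋃ α < γ, B α)
    (hstep : ∀ α < δ, RelSubKappa κ (B α) (B (α + 1))) :
    ∀ α β : Ordinal.{u}, α ≤ β → β ≤ δ → RelSubKappa κ (B α) (B β) := by
  have key : ∀ β : Ordinal.{u}, β ≤ δ → ∀ α ≤ β, RelSubKappa' κ (B α) (B β) := by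
    intro β
    induction β using Ordinal.limitRecOn with
    | zero =>
      intro _ α hα
      rw [nonpos_iff_eq_zero.1 hα]
      exact relSubKappa'_refl κ hκ _
    | add_one γ ih =>
      intro hβδ α hα
      rcases eq_or_lt_of_le hα with rfl | h
      · exact relSubKappa'_refl κ hκ _
      · have hγsucc : γ < Order.succ γ := Order.lt_succ γ
        have hγδ : γ < δ := lt_of_lt_of_le hγsucc hβδ
        have hαγ : α ≤ γ := Order.lt_succ_iff.1 h
        have step := (relSubKappa_iff κ (B γ) (B (γ + 1))).1 (hstep γ hγδ)
        rw [Ordinal.add_one_eq_succ] at step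
        exact relSubKappa'_trans κ hκ (ih hγδ.le α hαγ) step
    | limit γ hlim ih =>
      intro hβδ α hα
      rcases eq_or_lt_of_le hα with rfl | h
      · exact relSubKappa'_refl κ hκ _
      · refine ⟨hmono α γ hα hβδ, fun b hb => ?_⟩
        rw [hcont γ hβδ hlim] at hb
        obtain ⟨γ', hγ', hb'⟩ := Set.mem_iUnion₂.1 hb
        have hmax : max α γ' < γ := max_lt h hγ'
        have hmaxδ : max α γ' ≤ δ := hmax.le.trans hβδ
        have hb'' : b ∈ B (max α γ') := hmono γ' (max α γ') (le_max_right _ _) hmaxδ hb'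
        exact (ih (max α γ') hmax hmaxδ α (le_max_left _ _)).2 b hb''
  intro α β hαβ hβδ
  exact (relSubKappa_iff κ (B α) (B β)).2 (key β hβδ α hαβ)
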